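/- Let U, V ∈ ℝ^{n×r} have orthonormal columns and satisfy assumption A1 with parameter μ₀. Let Z = UXᵀ + YVᵀ with UᵀY = 0, where the rows of X and Y satisfy ‖X^i‖² ≤ c₁²μ₀r/n and ‖Y^j‖² ≤ c₂²μ₀r/n for all i, j. Let Ω be generated by a d-regular bipartite graph whose biadjacency matrix G satisfies G1 and G2 with constant C. Then ‖(n/d)·P_Ω(Z) − Z‖ ≤ (c₁ + c₂)·C·μ₀·r/√d, where ‖·‖ is the spectral norm. -/

import Mathlib

open Matrix
open scoped BigOperators

noncomputable section

/-- Euclidean norm of a vector. -/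
def vecNorm {β : Type*} [Fintype β] (x : β → ℝ) : ℝ :=
  Real.sqrt (∑ i, x i ^ 2)

/-- Spectral norm (largest singular value) of a real matrix. -/
def specNorm {α β : Type*} [Fintype α] [Fintype β] (A : Matrix α β ℝ) : ℝ :=
  sSup {c | ∃ x : β → ℝ, vecNorm x ≤ 1 ∧ c = vecNorm (A.mulVec x)}

/-- Second largest singular value of a real matrix (Courant–Fischer characterization). -/
def sigma2 {α β : Type*} [Fintype α] [Fintype β] (A : Matrix α β ℝ) : ℝ :=
  ⨅ v : β → ℝ, sSup {c | ∃ x : β → ℝ,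
    vecNorm x ≤ 1 ∧ (∑ i, v i * x i) = 0 ∧ c = vecNorm (A.mulVec x)}

/-- Frobenius norm. -/
def frobNorm {α β : Type*} [Fintype α] [Fintype β] (A : Matrix α β ℝ) : ℝ :=
  Real.sqrt (∑ i, ∑ j, A i j ^ 2)

/-- The square root of a positive semidefinite matrix, as `Matrix.PosSemidef.sqrt` was
defined in the older Mathlib. -/
def posSemidefSqrt {n : Type*} [Fintype n] [DecidableEq n] {A : Matrix n n ℝ}
    (hA : A.PosSemidef) : Matrix n n ℝ :=
  hA.1.eigenvectorUnitary.1 * diagonal ((↑) ∘ Real.sqrt ∘ hA.1.eigenvalues) *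
    (star hA.1.eigenvectorUnitary : Matrix n n ℝ)

/-- Nuclear norm: the sum of the singular values, i.e. the trace of `√(AᵀA)`. -/
def nuclearNorm {α β : Type*} [Fintype α] [Fintype β] [DecidableEq β]
    (A : Matrix α β ℝ) : ℝ :=
  (posSemidefSqrt (Matrix.posSemidef_conjTranspose_mul_self A)).trace

/-- The sampling operator `P_Ω`. -/
def sampl {n : ℕ} (Ω : Finset (Fin n × Fin n)) (M : Matrix (Fin n) (Fin n) ℝ) :
    Matrix (Fin n) (Fin n) ℝ :=
  Matrix.of fun i j => if (i, j) ∈ Ω then M i j else 0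

/-- The biadjacency matrix `G` of the bipartite graph with edge set `Ω`. -/
def biadj {n : ℕ} (Ω : Finset (Fin n × Fin n)) : Matrix (Fin n) (Fin n) ℝ :=
  Matrix.of fun i j => if (i, j) ∈ Ω then (1 : ℝ) else 0

/-- `Ω` is the edge set of a `d`-regular bipartite graph: every row and every column
of `G` has exactly `d` ones. -/
def RegularSampling {n : ℕ} (Ω : Finset (Fin n × Fin n)) (d : ℕ) : Prop :=
  (∀ i : Fin n, (Finset.univ.filter fun j => (i, j) ∈ Ω).card = d) ∧
  (∀ j : Fin n, (Finset.univ.filter fun i => (i, j) ∈ Ω).card = d)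

/-- Assumption G1: the all-ones vector is a top left- and right-singular vector of `G`,
with `σ₁(G) = d`. -/
def AssumptionG1 {n : ℕ} (Ω : Finset (Fin n × Fin n)) (d : ℕ) : Prop :=
  specNorm (biadj Ω) = d ∧
  (biadj Ω).mulVec (fun _ => 1) = (fun _ => (d : ℝ)) ∧
  Matrix.vecMul (fun _ => 1) (biadj Ω) = (fun _ => (d : ℝ))

/-- Assumption G2: `σ₂(G) ≤ C·√d`. -/
def AssumptionG2 {n : ℕ} (Ω : Finset (Fin n × Fin n)) (d : ℕ) (C : ℝ) : Prop :=
  sigma2 (biadj Ω) ≤ C * Real.sqrt d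

/-- Assumption A1 (`μ₀`-incoherence) for one factor: every row `U^i` satisfies
`‖U^i‖² ≤ μ₀ r / n`. -/
def IncoherentRows {n r : ℕ} (U : Matrix (Fin n) (Fin r) ℝ) (μ₀ : ℝ) : Prop :=
  ∀ i : Fin n, (∑ k, U i k ^ 2) ≤ μ₀ * r / n

/-- Assumption A2 (strong incoherence with parameter `δ`) for one factor:
for every `S` with `|S| = d`, `‖(n/d)·∑_{k∈S} U^k (U^k)ᵀ − I‖ ≤ δ`. -/
def StrongIncoherence {n r : ℕ} (U : Matrix (Fin n) (Fin r) ℝ) (d : ℕ) (δ : ℝ) : Prop :=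
  ∀ S : Finset (Fin n), S.card = d →
    specNorm (((n : ℝ) / (d : ℝ)) • (∑ k ∈ S, Matrix.vecMulVec (U k) (U k)) - 1) ≤ δ

/-- `M = U · diagonal s · Vᵀ` is a thin SVD of the rank-`r` matrix `M`. -/
def IsThinSVD {n r : ℕ} (M : Matrix (Fin n) (Fin n) ℝ)
    (U : Matrix (Fin n) (Fin r) ℝ) (s : Fin r → ℝ) (V : Matrix (Fin n) (Fin r) ℝ) : Prop :=
  Uᵀ * U = 1 ∧ Vᵀ * V = 1 ∧ (∀ i, 0 < s i) ∧ M = U * Matrix.diagonal s * Vᵀ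

/-- The projection `P_T` onto the subspace `T` spanned by matrices `UXᵀ` and `YVᵀ`. -/
def projT {n r : ℕ} (U V : Matrix (Fin n) (Fin r) ℝ) (Z : Matrix (Fin n) (Fin n) ℝ) :
    Matrix (Fin n) (Fin n) ℝ :=
  U * Uᵀ * Z + Z * (V * Vᵀ) - U * Uᵀ * Z * (V * Vᵀ)

/-- The projection `P_{T⊥}` onto the orthogonal complement of `T`. -/
def projTperp {n r : ℕ} (U V : Matrix (Fin n) (Fin r) ℝ) (Z : Matrix (Fin n) (Fin n) ℝ) :
    Matrix (Fin n) (Fin n) ℝ :=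
  (1 - U * Uᵀ) * Z * (1 - V * Vᵀ)

end

/-!
Writing `J` for the all-ones matrix and `G` for the biadjacency matrix,
`(n/d)·P_Ω(Z) - Z = B ⊙ Z` with `B = (n/d)·(G - (d/n)·J)`. By G1, `G - (d/n)·J` kills `𝟙` and
agrees with `G` on `𝟙⊥`, so its norm is at most `σ₂(G) ≤ C√d`. For a Hadamard product with a
factored matrix, `aᵀ (B ⊙ W Pᵀ) b = ∑ₖ (a ∘ Wₖ)ᵀ B (b ∘ Pₖ)`, and Cauchy–Schwarz over `k` gives
`‖B ⊙ W Pᵀ‖ ≤ ‖B‖ · maxᵢ ‖Wⁱ‖ · maxⱼ ‖Pʲ‖`. Applied to `U Xᵀ` and `Y Vᵀ` separately this yields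
`(n/d) · C√d · (c₁ + c₂) · μ₀ r / n`.
-/

section EuclideanNorm

variable {ι : Type*} [Fintype ι]

lemma vecNorm_eq_norm (x : ι → ℝ) :
    vecNorm x = ‖(WithLp.toLp 2 x : EuclideanSpace ℝ ι)‖ := by
  simp [vecNorm, EuclideanSpace.norm_eq]

lemma vecNorm_nonneg (x : ι → ℝ) : 0 ≤ vecNorm x := Real.sqrt_nonneg _

lemma vecNorm_sq (x : ι → ℝ) : vecNorm x ^ 2 = x ⬝ᵥ x := by
  rw [vecNorm, Real.sq_sqrt (by positivity)]
  simp only [dotProduct, sq]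

lemma vecNorm_eq_zero {x : ι → ℝ} : vecNorm x = 0 ↔ x = 0 := by
  simp [vecNorm_eq_norm]

lemma vecNorm_smul (c : ℝ) (x : ι → ℝ) : vecNorm (c • x) = |c| * vecNorm x := by
  simp [vecNorm_eq_norm, norm_smul]

lemma vecNorm_add_le (x y : ι → ℝ) : vecNorm (x + y) ≤ vecNorm x + vecNorm y := by
  simpa [vecNorm_eq_norm] using
    norm_add_le (WithLp.toLp 2 x : EuclideanSpace ℝ ι) (WithLp.toLp 2 y)

lemma abs_dotProduct_le (x y : ι → ℝ) : |x ⬝ᵥ y| ≤ vecNorm x * vecNorm y := by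
  simpa [vecNorm_eq_norm, EuclideanSpace.inner_toLp_toLp, dotProduct_comm] using
    abs_real_inner_le_norm (WithLp.toLp 2 x : EuclideanSpace ℝ ι) (WithLp.toLp 2 y)

lemma vecNorm_const (a : ℝ) : vecNorm (fun _ : ι => a) = |a| * √(Fintype.card ι) := by
  simp [vecNorm, Real.sqrt_sq_eq_abs, mul_comm]

lemma const_dotProduct (a : ℝ) (y : ι → ℝ) : (fun _ => a) ⬝ᵥ y = a * ∑ i, y i := by
  simp [dotProduct, Finset.mul_sum]

lemma vecNorm_sub_mean_le (t : ι → ℝ) :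
    vecNorm (t - fun _ => (∑ i, t i) / Fintype.card ι) ≤ vecNorm t := by
  set N : ℝ := (Fintype.card ι : ℝ)
  set m := (∑ i, t i) / N
  have hm : N * m ^ 2 = (∑ i, t i) * m := by
    rcases eq_or_ne N 0 with hN | hN
    · simp [m, hN]
    · simp only [m]; field_simp
  have hSm : 0 ≤ (∑ i, t i) * m := by
    rw [← mul_div_assoc]; exact div_nonneg (mul_self_nonneg _) (Nat.cast_nonneg _)
  refine (pow_le_pow_iff_left₀ (vecNorm_nonneg _) (vecNorm_nonneg _) two_ne_zero).mp ?_
  rw [vecNorm_sq, vecNorm_sq, sub_dotProduct, dotProduct_sub, dotProduct_sub,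
    dotProduct_comm t (fun _ => m), const_dotProduct, const_dotProduct]
  simp only [Finset.sum_const, Finset.card_univ, nsmul_eq_mul]
  nlinarith

end EuclideanNorm

section SingularValues

variable {α β : Type*} [Fintype α] [Fintype β]

lemma exists_vecNorm_mulVec_le (A : Matrix α β ℝ) :
    ∃ K, ∀ x, vecNorm x ≤ 1 → vecNorm (A *ᵥ x) ≤ K := by
  classical
  let f := LinearMap.toContinuousLinearMap (Matrix.toLpLin 2 2 A)
  refine ⟨‖f‖, fun x hx => ?_⟩
  have := f.le_opNorm (WithLp.toLp 2 x)
  rw [vecNorm_eq_norm] at hx ⊢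
  simp [f, Matrix.toLpLin_toLp] at this
  nlinarith [norm_nonneg f]

lemma vecNorm_mulVec_le_mul_of_unit {A : Matrix α β ℝ} {P : (β → ℝ) → Prop}
    (hP : ∀ (c : ℝ) x, P x → P (c • x)) {s : ℝ}
    (h : ∀ x, vecNorm x ≤ 1 → P x → vecNorm (A *ᵥ x) ≤ s) {x : β → ℝ} (hx : P x) :
    vecNorm (A *ᵥ x) ≤ s * vecNorm x := by
  rcases (vecNorm_nonneg x).eq_or_lt with h0 | hpos
  · simp [vecNorm_eq_zero.1 h0.symm, vecNorm]
  · have hunit := h ((vecNorm x)⁻¹ • x)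
      (by rw [vecNorm_smul, abs_inv, abs_of_pos hpos, inv_mul_cancel₀ hpos.ne']) (hP _ _ hx)
    rw [mulVec_smul, vecNorm_smul, abs_inv, abs_of_pos hpos, inv_mul_le_iff₀ hpos] at hunit
    linarith

lemma vecNorm_mulVec_le_specNorm (A : Matrix α β ℝ) {x : β → ℝ} (hx : vecNorm x ≤ 1) :
    vecNorm (A *ᵥ x) ≤ specNorm A :=
  have ⟨K, hK⟩ := exists_vecNorm_mulVec_le A
  le_csSup ⟨K, by rintro _ ⟨y, hy, rfl⟩; exact hK y hy⟩ ⟨x, hx, rfl⟩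

lemma specNorm_le_bound {A : Matrix α β ℝ} {K : ℝ} (hK : 0 ≤ K)
    (h : ∀ x, vecNorm (A *ᵥ x) ≤ K * vecNorm x) : specNorm A ≤ K :=
  csSup_le ⟨_, 0, by simp [vecNorm], rfl⟩ fun _ ⟨x, hx, hc⟩ =>
    hc ▸ (h x).trans (mul_le_of_le_one_right hK hx)

lemma specNorm_nonneg (A : Matrix α β ℝ) : 0 ≤ specNorm A :=
  (vecNorm_nonneg _).trans (vecNorm_mulVec_le_specNorm A (x := 0) (by simp [vecNorm]))

lemma vecNorm_mulVec_le_specNorm_mul (A : Matrix α β ℝ) (x : β → ℝ) :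
    vecNorm (A *ᵥ x) ≤ specNorm A * vecNorm x :=
  vecNorm_mulVec_le_mul_of_unit (P := fun _ => True) (fun _ _ _ => trivial)
    (fun _ hx _ => vecNorm_mulVec_le_specNorm A hx) trivial

lemma specNorm_add_le (A₁ A₂ : Matrix α β ℝ) : specNorm (A₁ + A₂) ≤ specNorm A₁ + specNorm A₂ :=
  specNorm_le_bound (add_nonneg (specNorm_nonneg A₁) (specNorm_nonneg A₂)) fun x => by
    rw [add_mulVec, add_mul]
    exact (vecNorm_add_le _ _).trans (add_le_add (vecNorm_mulVec_le_specNorm_mul A₁ x)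
      (vecNorm_mulVec_le_specNorm_mul A₂ x))

lemma bddAbove_vecNorm_mulVec_orthogonal (A : Matrix α β ℝ) (v : β → ℝ) :
    BddAbove {c | ∃ x : β → ℝ,
      vecNorm x ≤ 1 ∧ (∑ i, v i * x i) = 0 ∧ c = vecNorm (A *ᵥ x)} :=
  have ⟨K, hK⟩ := exists_vecNorm_mulVec_le A
  ⟨K, by rintro _ ⟨y, hy, -, rfl⟩; exact hK y hy⟩

lemma vecNorm_mulVec_le_sSup_mul_of_orthogonal (A : Matrix α β ℝ) {v x : β → ℝ}
    (hx : v ⬝ᵥ x = 0) :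
    vecNorm (A *ᵥ x) ≤ sSup {c | ∃ x : β → ℝ,
      vecNorm x ≤ 1 ∧ (∑ i, v i * x i) = 0 ∧ c = vecNorm (A *ᵥ x)} * vecNorm x :=
  vecNorm_mulVec_le_mul_of_unit (P := fun x => v ⬝ᵥ x = 0)
    (fun c x hx => by rw [dotProduct_smul, hx, smul_zero])
    (fun y hy hvy => le_csSup (bddAbove_vecNorm_mulVec_orthogonal A v) ⟨y, hy, hvy, rfl⟩) hx

lemma sigma2_nonneg (A : Matrix α β ℝ) : 0 ≤ sigma2 A :=
  le_ciInf fun v => le_csSup (bddAbove_vecNorm_mulVec_orthogonal A v)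
    ⟨0, by simp [vecNorm], by simp, by simp [vecNorm]⟩

/-- The Courant–Fischer lower bound for `σ₂`: the plane spanned by `e` and `w` meets the
hyperplane `v⊥` of every `v`, and `A` stretches every vector of that plane at least by `‖A w‖`. -/
lemma vecNorm_mulVec_le_sigma2 {A : Matrix α β ℝ} {e w : β → ℝ} (he : vecNorm e = 1)
    (hw : vecNorm w ≤ 1) (hew : e ⬝ᵥ w = 0) (hAew : (A *ᵥ e) ⬝ᵥ (A *ᵥ w) = 0)
    (htop : vecNorm (A *ᵥ w) ≤ vecNorm (A *ᵥ e)) :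
    vecNorm (A *ᵥ w) ≤ sigma2 A := by
  refine le_ciInf fun v => ?_
  by_cases hvw : v ⬝ᵥ w = 0
  · exact le_csSup (bddAbove_vecNorm_mulVec_orthogonal A v) ⟨w, hw, hvw, rfl⟩
  set y := (v ⬝ᵥ w) • e - (v ⬝ᵥ e) • w
  have hvy : v ⬝ᵥ y = 0 := by
    simp only [y, dotProduct_sub, dotProduct_smul, smul_eq_mul]; ring
  have hee : e ⬝ᵥ e = 1 := by rw [← vecNorm_sq, he, one_pow]
  have hy : vecNorm y ^ 2 = (v ⬝ᵥ w) ^ 2 + (v ⬝ᵥ e) ^ 2 * vecNorm w ^ 2 := by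
    simp only [vecNorm_sq, y, dotProduct_sub, sub_dotProduct, dotProduct_smul, smul_dotProduct,
      smul_eq_mul, dotProduct_comm w e, hew, hee]
    ring
  have hAy : vecNorm (A *ᵥ y) ^ 2 =
      (v ⬝ᵥ w) ^ 2 * vecNorm (A *ᵥ e) ^ 2 + (v ⬝ᵥ e) ^ 2 * vecNorm (A *ᵥ w) ^ 2 := by
    simp only [vecNorm_sq, y, mulVec_sub, mulVec_smul, dotProduct_sub, sub_dotProduct,
      dotProduct_smul, smul_dotProduct, smul_eq_mul, dotProduct_comm (A *ᵥ w) (A *ᵥ e), hAew]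
    ring
  have hypos : 0 < vecNorm y := by
    have hsq : (0 : ℝ) ^ 2 < vecNorm y ^ 2 := by
      rw [hy, zero_pow two_ne_zero]
      exact add_pos_of_pos_of_nonneg (sq_pos_of_ne_zero hvw) (by positivity)
    exact lt_of_pow_lt_pow_left₀ 2 (vecNorm_nonneg y) hsq
  have hstretch : vecNorm (A *ᵥ w) * vecNorm y ≤ vecNorm (A *ᵥ y) := by
    refine (pow_le_pow_iff_left₀ (mul_nonneg (vecNorm_nonneg _) (vecNorm_nonneg _))
      (vecNorm_nonneg _) two_ne_zero).mp ?_
    have hAw : vecNorm (A *ᵥ w) ^ 2 ≤ vecNorm (A *ᵥ e) ^ 2 :=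
      pow_le_pow_left₀ (vecNorm_nonneg _) htop 2
    have hw2 : vecNorm w ^ 2 ≤ 1 := pow_le_one₀ (vecNorm_nonneg w) hw
    rw [mul_pow, hy, hAy]
    nlinarith [mul_le_mul_of_nonneg_left hAw (sq_nonneg (v ⬝ᵥ w)),
      mul_le_mul_of_nonneg_left hw2
        (mul_nonneg (sq_nonneg (v ⬝ᵥ e)) (sq_nonneg (vecNorm (A *ᵥ w))))]
  exact le_of_mul_le_mul_right
    (hstretch.trans (vecNorm_mulVec_le_sSup_mul_of_orthogonal A hvy)) hypos

end SingularValues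

section AllOnesSingularVector

variable {ι : Type*} [Fintype ι] {A : Matrix ι ι ℝ} {d : ℝ}

lemma vecNorm_mulVec_le_sigma2_mul_of_sum_eq_zero [Nonempty ι] (hnorm : specNorm A = d)
    (hrow : A *ᵥ (fun _ => 1) = fun _ => d) (hcol : (fun _ => 1) ᵥ* A = fun _ => d)
    {w : ι → ℝ} (hw : ∑ i, w i = 0) :
    vecNorm (A *ᵥ w) ≤ sigma2 A * vecNorm w := by
  refine vecNorm_mulVec_le_mul_of_unit (P := fun w => ∑ i, w i = 0)
    (fun c x hx => by simp [← Finset.mul_sum, hx]) (fun x hx hx0 => ?_) hw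
  have hcard : 0 < √(Fintype.card ι : ℝ) := by simp [Fintype.card_pos]
  refine vecNorm_mulVec_le_sigma2 (e := (√(Fintype.card ι : ℝ))⁻¹ • fun _ => 1) ?_ hx ?_ ?_ ?_
  · rw [vecNorm_smul, vecNorm_const, abs_inv, abs_of_pos hcard, abs_one, one_mul,
      inv_mul_cancel₀ hcard.ne']
  · rw [smul_dotProduct, const_dotProduct, hx0, mul_zero, smul_zero]
  · rw [mulVec_smul, hrow, smul_dotProduct, show (fun _ : ι => d) = d • fun _ => (1 : ℝ) by
      ext; simp, smul_dotProduct, dotProduct_mulVec, hcol, const_dotProduct, hx0]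
    simp
  · rw [mulVec_smul, hrow, vecNorm_smul, vecNorm_const, abs_inv, abs_of_pos hcard,
      mul_left_comm, inv_mul_cancel₀ hcard.ne', mul_one, ← hnorm]
    exact (vecNorm_mulVec_le_specNorm A hx).trans (le_abs_self _)

lemma vecNorm_sub_smul_of_one_mulVec_le [Nonempty ι] (hnorm : specNorm A = d)
    (hrow : A *ᵥ (fun _ => 1) = fun _ => d) (hcol : (fun _ => 1) ᵥ* A = fun _ => d)
    (t : ι → ℝ) :
    vecNorm ((A - (d / Fintype.card ι) • of 1) *ᵥ t) ≤ sigma2 A * vecNorm t := by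
  set m := (∑ i, t i) / (Fintype.card ι : ℝ)
  have hN : (Fintype.card ι : ℝ) ≠ 0 := Nat.cast_ne_zero.2 Fintype.card_ne_zero
  have hcenter : (A - (d / Fintype.card ι) • of 1) *ᵥ t = A *ᵥ (t - fun _ => m) := by
    rw [sub_mulVec, mulVec_sub, show (fun _ => m) = m • fun _ => (1 : ℝ) by ext; simp,
      mulVec_smul, hrow]
    ext i
    simp [mulVec, dotProduct, m, ← Finset.mul_sum]
    ring
  have hsum : ∑ i, (t - fun _ => m : ι → ℝ) i = 0 := by
    simp [Finset.sum_sub_distrib, m, mul_div_cancel₀ _ hN]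
  rw [hcenter]
  exact (vecNorm_mulVec_le_sigma2_mul_of_sum_eq_zero hnorm hrow hcol hsum).trans
    (mul_le_mul_of_nonneg_left (vecNorm_sub_mean_le t) (sigma2_nonneg A))

end AllOnesSingularVector

section SchurProduct

variable {α β ι : Type*} [Fintype α] [Fintype β] [Fintype ι]

lemma dotProduct_hadamard_mul_transpose_mulVec (B : Matrix α β ℝ) (W : Matrix α ι ℝ)
    (P : Matrix β ι ℝ) (a : α → ℝ) (b : β → ℝ) :
    a ⬝ᵥ ((B ⊙ (W * Pᵀ)) *ᵥ b) = ∑ k, (a * Wᵀ k) ⬝ᵥ (B *ᵥ (b * Pᵀ k)) := by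
  simp only [dotProduct, mulVec, hadamard_apply, mul_apply, transpose_apply, Pi.mul_apply,
    Finset.mul_sum, Finset.sum_mul]
  conv_rhs => rw [Finset.sum_comm]
  refine Finset.sum_congr rfl fun i _ => ?_
  conv_rhs => rw [Finset.sum_comm]
  exact Finset.sum_congr rfl fun j _ => Finset.sum_congr rfl fun k _ => by ring

lemma sum_vecNorm_mul_col_sq_le {W : Matrix α ι ℝ} {ρ : ℝ} (hW : ∀ i, ∑ k, W i k ^ 2 ≤ ρ)
    (a : α → ℝ) : ∑ k, vecNorm (a * Wᵀ k) ^ 2 ≤ ρ * vecNorm a ^ 2 := by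
  simp only [vecNorm_sq, dotProduct, Pi.mul_apply, transpose_apply]
  rw [Finset.sum_comm, Finset.mul_sum]
  gcongr with i
  calc ∑ k, a i * W i k * (a i * W i k) = a i * a i * ∑ k, W i k ^ 2 := by
        rw [Finset.mul_sum]; exact Finset.sum_congr rfl fun k _ => by ring
    _ ≤ ρ * (a i * a i) := by nlinarith [hW i, mul_self_nonneg (a i)]

variable {B : Matrix α β ℝ} {κ ρ₁ ρ₂ : ℝ} {W : Matrix α ι ℝ} {P : Matrix β ι ℝ}

lemma abs_dotProduct_hadamard_mul_transpose_mulVec_le (hκ : 0 ≤ κ)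
    (hB : ∀ t, vecNorm (B *ᵥ t) ≤ κ * vecNorm t)
    (hW : ∀ i, ∑ k, W i k ^ 2 ≤ ρ₁) (hP : ∀ j, ∑ k, P j k ^ 2 ≤ ρ₂) (a : α → ℝ) (b : β → ℝ) :
    |a ⬝ᵥ ((B ⊙ (W * Pᵀ)) *ᵥ b)| ≤ κ * (√ρ₁ * vecNorm a) * (√ρ₂ * vecNorm b) := by
  rw [dotProduct_hadamard_mul_transpose_mulVec]
  calc |∑ k, (a * Wᵀ k) ⬝ᵥ (B *ᵥ (b * Pᵀ k))|
      ≤ ∑ k, |(a * Wᵀ k) ⬝ᵥ (B *ᵥ (b * Pᵀ k))| := Finset.abs_sum_le_sum_abs _ _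
    _ ≤ ∑ k, κ * (vecNorm (a * Wᵀ k) * vecNorm (b * Pᵀ k)) := by
        gcongr with k
        calc _ ≤ vecNorm (a * Wᵀ k) * vecNorm (B *ᵥ (b * Pᵀ k)) := abs_dotProduct_le _ _
          _ ≤ vecNorm (a * Wᵀ k) * (κ * vecNorm (b * Pᵀ k)) :=
            mul_le_mul_of_nonneg_left (hB _) (vecNorm_nonneg _)
          _ = _ := by ring
    _ = κ * ∑ k, vecNorm (a * Wᵀ k) * vecNorm (b * Pᵀ k) := by rw [Finset.mul_sum]
    _ ≤ κ * (√(∑ k, vecNorm (a * Wᵀ k) ^ 2) * √(∑ k, vecNorm (b * Pᵀ k) ^ 2)) := by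
        gcongr
        exact Real.sum_mul_le_sqrt_mul_sqrt _ _ _
    _ ≤ κ * (√(ρ₁ * vecNorm a ^ 2) * √(ρ₂ * vecNorm b ^ 2)) := by
        gcongr
        · exact sum_vecNorm_mul_col_sq_le hW a
        · exact sum_vecNorm_mul_col_sq_le hP b
    _ = κ * (√ρ₁ * vecNorm a) * (√ρ₂ * vecNorm b) := by
        rw [Real.sqrt_mul' _ (sq_nonneg _), Real.sqrt_mul' _ (sq_nonneg _),
          Real.sqrt_sq (vecNorm_nonneg a), Real.sqrt_sq (vecNorm_nonneg b)]
        ring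

lemma specNorm_hadamard_mul_transpose_le (hκ : 0 ≤ κ)
    (hB : ∀ t, vecNorm (B *ᵥ t) ≤ κ * vecNorm t)
    (hW : ∀ i, ∑ k, W i k ^ 2 ≤ ρ₁) (hP : ∀ j, ∑ k, P j k ^ 2 ≤ ρ₂) :
    specNorm (B ⊙ (W * Pᵀ)) ≤ κ * √ρ₁ * √ρ₂ :=
  specNorm_le_bound (by positivity) fun b => by
    set y := (B ⊙ (W * Pᵀ)) *ᵥ b
    have h := (le_abs_self _).trans
      (abs_dotProduct_hadamard_mul_transpose_mulVec_le hκ hB hW hP y b)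
    rw [← vecNorm_sq] at h
    have := vecNorm_nonneg b
    have : 0 ≤ κ * √ρ₁ * √ρ₂ := by positivity
    nlinarith [vecNorm_nonneg y, mul_nonneg this (vecNorm_nonneg b)]

end SchurProduct

section Sampling

variable {n : ℕ}

lemma smul_sampl_sub_eq_hadamard (c : ℝ) (Ω : Finset (Fin n × Fin n))
    (M : Matrix (Fin n) (Fin n) ℝ) : c • sampl Ω M - M = (c • biadj Ω - of 1) ⊙ M := by
  ext i j
  simp only [sampl, biadj, Matrix.sub_apply, Matrix.smul_apply, hadamard_apply, of_apply,
    Pi.one_apply, smul_eq_mul]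
  split_ifs <;> ring

lemma vecNorm_smul_biadj_sub_mulVec_le {d : ℕ} (hn : 0 < n) (hd : 0 < d)
    {Ω : Finset (Fin n × Fin n)} (hG1 : AssumptionG1 Ω d) (t : Fin n → ℝ) :
    vecNorm (((n / d : ℝ) • biadj Ω - of 1) *ᵥ t) ≤ (n / d : ℝ) * sigma2 (biadj Ω) * vecNorm t := by
  have : Nonempty (Fin n) := ⟨⟨0, hn⟩⟩
  have hnR : (0 : ℝ) < n := Nat.cast_pos.2 hn
  have hdR : (0 : ℝ) < d := Nat.cast_pos.2 hd
  have hB : (n / d : ℝ) • biadj Ω - of 1 =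
      (n / d : ℝ) • (biadj Ω - ((d : ℝ) / Fintype.card (Fin n)) • of 1) := by
    rw [Fintype.card_fin, smul_sub, smul_smul, div_mul_div_cancel₀' hnR.ne', div_self hdR.ne',
      one_smul]
  rw [hB, smul_mulVec, vecNorm_smul, abs_of_pos (by positivity), mul_assoc]
  exact mul_le_mul_of_nonneg_left
    (vecNorm_sub_smul_of_one_mulVec_le hG1.1 hG1.2.1 hG1.2.2 t) (by positivity)

end Sampling

theorem stmt_10_general {n d r : ℕ} (hn : 0 < n) (hd : 0 < d)
    {C μ₀ c₁ c₂ : ℝ} (hc₁ : 0 ≤ c₁) (hc₂ : 0 ≤ c₂)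
    (U V : Matrix (Fin n) (Fin r) ℝ)
    (hA1U : IncoherentRows U μ₀) (hA1V : IncoherentRows V μ₀)
    (X Y : Matrix (Fin n) (Fin r) ℝ)
    (hX : ∀ i : Fin n, (∑ k, X i k ^ 2) ≤ c₁ ^ 2 * μ₀ * r / n)
    (hY : ∀ j : Fin n, (∑ k, Y j k ^ 2) ≤ c₂ ^ 2 * μ₀ * r / n)
    (Ω : Finset (Fin n × Fin n))
    (hG1 : AssumptionG1 Ω d) (hG2 : AssumptionG2 Ω d C) :
    specNorm (((n : ℝ) / (d : ℝ)) • sampl Ω (U * Xᵀ + Y * Vᵀ) - (U * Xᵀ + Y * Vᵀ)) ≤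
      (c₁ + c₂) * C * μ₀ * r / Real.sqrt d := by
  set ρ := μ₀ * r / n
  have hρ : 0 ≤ ρ := (Finset.sum_nonneg fun k _ => sq_nonneg (U ⟨0, hn⟩ k)).trans (hA1U _)
  have hκ : 0 ≤ (n / d : ℝ) * sigma2 (biadj Ω) := by
    have := sigma2_nonneg (biadj Ω)
    positivity
  have hB := vecNorm_smul_biadj_sub_mulVec_le hn hd hG1
  have hsqrt : ∀ c, 0 ≤ c → √(c ^ 2 * μ₀ * r / n) = c * √ρ := fun c hc => by
    rw [show c ^ 2 * μ₀ * r / n = c ^ 2 * ρ by ring, Real.sqrt_mul (sq_nonneg c),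
      Real.sqrt_sq hc]
  rw [smul_sampl_sub_eq_hadamard, hadamard_add]
  calc _ ≤ _ := specNorm_add_le _ _
    _ ≤ (n / d : ℝ) * sigma2 (biadj Ω) * √ρ * √(c₁ ^ 2 * μ₀ * r / n) +
        (n / d : ℝ) * sigma2 (biadj Ω) * √(c₂ ^ 2 * μ₀ * r / n) * √ρ :=
      add_le_add (specNorm_hadamard_mul_transpose_le hκ hB hA1U hX)
        (specNorm_hadamard_mul_transpose_le hκ hB hY hA1V)
    _ = (n / d : ℝ) * sigma2 (biadj Ω) * ((c₁ + c₂) * ρ) := by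
      rw [hsqrt c₁ hc₁, hsqrt c₂ hc₂]
      linear_combination ((n / d : ℝ) * sigma2 (biadj Ω) * (c₁ + c₂)) * Real.mul_self_sqrt hρ
    _ ≤ (n / d : ℝ) * (C * √d) * ((c₁ + c₂) * ρ) := by
      gcongr
      exact hG2
    _ = (c₁ + c₂) * C * μ₀ * r / √d := by
      simp only [ρ]
      field_simp
      rw [Real.sq_sqrt (Nat.cast_nonneg d)]
      ring

/-- Lemma 2: spectral-norm bound for incoherent `Z ∈ T`. -/
theorem stmt_10 {n d r : ℕ} (hn : 0 < n) (hd : 0 < d) (hr : 0 < r)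
    {C μ₀ c₁ c₂ : ℝ} (hC : 0 < C) (hc₁ : 0 ≤ c₁) (hc₂ : 0 ≤ c₂)
    (U V : Matrix (Fin n) (Fin r) ℝ) (hU : Uᵀ * U = 1) (hV : Vᵀ * V = 1)
    (hA1U : IncoherentRows U μ₀) (hA1V : IncoherentRows V μ₀)
    (X Y : Matrix (Fin n) (Fin r) ℝ) (hUY : Uᵀ * Y = 0)
    (hX : ∀ i : Fin n, (∑ k, X i k ^ 2) ≤ c₁ ^ 2 * μ₀ * r / n)
    (hY : ∀ j : Fin n, (∑ k, Y j k ^ 2) ≤ c₂ ^ 2 * μ₀ * r / n)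
    (Ω : Finset (Fin n × Fin n)) (hreg : RegularSampling Ω d)
    (hG1 : AssumptionG1 Ω d) (hG2 : AssumptionG2 Ω d C) :
    specNorm (((n : ℝ) / (d : ℝ)) • sampl Ω (U * Xᵀ + Y * Vᵀ) - (U * Xᵀ + Y * Vᵀ)) ≤
      (c₁ + c₂) * C * μ₀ * r / Real.sqrt d :=
  stmt_10_general hn hd hc₁ hc₂ U V hA1U hA1V X Y hX hY Ω hG1 hG2
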